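/- Let r := H ← c ◇ B be a rule of program P. If the query ⟨B | c⟩ loops with respect to P, then ⟨H | c⟩ loops with respect to P. -/

import Mathlib

/- A formalization of binary CLP(C): terms, constraints, queries, rules,
   derivation steps, loops, projections, filters, DN / DNlog / DNsyn. -/

namespace CLP

/-- First-order terms over a signature of function symbols `F` with arities `arF`. -/
inductive Tm (F : Type) (arF : F → ℕ) : Type
  | var : ℕ → Tm F arF
  | app : (f : F) → (Fin (arF f) → Tm F arF) → Tm F arF

variable {F : Type} {arF : F → ℕ} {Pc : Type} {arP : Pc → ℕ}
  {Prd : Type} {arPrd : Prd → ℕ} {D : Type}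

/-- Variables of a term. -/
def Tm.fv : Tm F arF → Finset ℕ
  | .var x => {x}
  | .app _ ts => Finset.univ.biUnion fun i => (ts i).fv

/-- Apply a variable substitution to a term. -/
def Tm.rename (σ : ℕ → ℕ) : Tm F arF → Tm F arF
  | .var x => .var (σ x)
  | .app f ts => .app f fun i => (ts i).rename σ

/-- Finite conjunctions of primitive constraints (including equality). -/
inductive Con (F : Type) (arF : F → ℕ) (Pc : Type) (arP : Pc → ℕ) : Type
  | tru : Con F arF Pc arP
  | eq : Tm F arF → Tm F arF → Con F arF Pc arP
  | prim : (c : Pc) → (Fin (arP c) → Tm F arF) → Con F arF Pc arP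
  | and : Con F arF Pc arP → Con F arF Pc arP → Con F arF Pc arP

/-- Variables of a constraint. -/
def Con.fv : Con F arF Pc arP → Finset ℕ
  | .tru => ∅
  | .eq s t => s.fv ∪ t.fv
  | .prim _ ts => Finset.univ.biUnion fun i => (ts i).fv
  | .and c d => c.fv ∪ d.fv

/-- Apply a variable substitution to a constraint. -/
def Con.rename (σ : ℕ → ℕ) : Con F arF Pc arP → Con F arF Pc arP
  | .tru => .tru
  | .eq s t => .eq (s.rename σ) (t.rename σ)
  | .prim c ts => .prim c fun i => (ts i).rename σ
  | .and c d => .and (c.rename σ) (d.rename σ)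

/-- The domain of computation `D_C`: an interpretation of the function and
constraint-predicate symbols over a domain `D`. -/
structure Interp (F : Type) (arF : F → ℕ) (Pc : Type) (arP : Pc → ℕ) (D : Type) where
  fn : (f : F) → (Fin (arF f) → D) → D
  pr : (c : Pc) → (Fin (arP c) → D) → Prop

/-- Evaluation of a term under a valuation `v : Var → D`. -/
def Tm.eval (If : (f : F) → (Fin (arF f) → D) → D) (v : ℕ → D) : Tm F arF → D
  | .var x => v x
  | .app f ts => If f fun i => (ts i).eval If v

/-- `D_C ⊨_v c`. -/
def Con.Sat (I : Interp F arF Pc arP D) (v : ℕ → D) : Con F arF Pc arP → Prop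
  | .tru => True
  | .eq s t => s.eval I.fn v = t.eval I.fn v
  | .prim c ts => I.pr c fun i => (ts i).eval I.fn v
  | .and c d => c.Sat I v ∧ d.Sat I v

/-- A query `⟨p(t̃) | d⟩`. -/
structure Query (F : Type) (arF : F → ℕ) (Pc : Type) (arP : Pc → ℕ)
    (Prd : Type) (arPrd : Prd → ℕ) where
  p : Prd
  args : Fin (arPrd p) → Tm F arF
  con : Con F arF Pc arP

/-- Variables of a query. -/
def Query.fv (S : Query F arF Pc arP Prd arPrd) : Finset ℕ :=
  (Finset.univ.biUnion fun i => (S.args i).fv) ∪ S.con.fv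

/-- Apply a variable substitution to a query. -/
def Query.rename (σ : ℕ → ℕ) (S : Query F arF Pc arP Prd arPrd) :
    Query F arF Pc arP Prd arPrd :=
  ⟨S.p, fun i => (S.args i).rename σ, S.con.rename σ⟩

/-- The set `[S]` of atoms (predicate applied to domain values) described by a query `S`. -/
def Query.set (I : Interp F arF Pc arP D) (S : Query F arF Pc arP Prd arPrd) :
    Set (Σ p : Prd, Fin (arPrd p) → D) :=
  { a | ∃ v : ℕ → D, S.con.Sat I v ∧ a = ⟨S.p, fun i => (S.args i).eval I.fn v⟩ }

/-- `S'` is more general than `S` iff `[S] ⊆ [S']`. -/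
def MoreGen (I : Interp F arF Pc arP D) (S' S : Query F arF Pc arP Prd arPrd) : Prop :=
  S.set I ⊆ S'.set I

/-- A binary rule `p(s̃) ← c ◇ q(t̃)`. -/
structure Rule (F : Type) (arF : F → ℕ) (Pc : Type) (arP : Pc → ℕ)
    (Prd : Type) (arPrd : Prd → ℕ) where
  hp : Prd
  hargs : Fin (arPrd hp) → Tm F arF
  con : Con F arF Pc arP
  bp : Prd
  bargs : Fin (arPrd bp) → Tm F arF

/-- Variables of a rule. -/
def Rule.fv (r : Rule F arF Pc arP Prd arPrd) : Finset ℕ :=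
  (Finset.univ.biUnion fun i => (r.hargs i).fv) ∪ r.con.fv ∪
    (Finset.univ.biUnion fun i => (r.bargs i).fv)

/-- Apply a variable substitution to a rule. -/
def Rule.rename (σ : ℕ → ℕ) (r : Rule F arF Pc arP Prd arPrd) : Rule F arF Pc arP Prd arPrd :=
  ⟨r.hp, fun i => (r.hargs i).rename σ, r.con.rename σ, r.bp, fun i => (r.bargs i).rename σ⟩

/-- `r'` is a variant of `r`: obtained by renaming the variables by a bijection. -/
def Rule.IsVariant (r r' : Rule F arF Pc arP Prd arPrd) : Prop :=
  ∃ ρ : ℕ ≃ ℕ, r' = r.rename ρ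

/-- The query `⟨H | c⟩` of a rule `H ← c ◇ B`. -/
def Rule.headQuery (r : Rule F arF Pc arP Prd arPrd) : Query F arF Pc arP Prd arPrd :=
  ⟨r.hp, r.hargs, r.con⟩

/-- The query `⟨B | c⟩` of a rule `H ← c ◇ B`. -/
def Rule.bodyQuery (r : Rule F arF Pc arP Prd arPrd) : Query F arF Pc arP Prd arPrd :=
  ⟨r.bp, r.bargs, r.con⟩

/-- The constraint `ũ = w̃` for two sequences of terms. -/
def argsEqCon {n : ℕ} (u w : Fin n → Tm F arF) : Con F arF Pc arP :=
  (List.ofFn fun i => Con.eq (u i) (w i)).foldr .and .tru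

/-- The constraint `s̃' = ũ ∧ c' ∧ d` of the query resulting from a derivation step of
`S = ⟨p(ũ) | d⟩` with input rule `r' = p(s̃') ← c' ◇ q(t̃')`. -/
def stepCon (r' : Rule F arF Pc arP Prd arPrd) (S : Query F arF Pc arP Prd arPrd)
    (h : r'.hp = S.p) : Con F arF Pc arP :=
  Con.and
    (argsEqCon (fun i : Fin (arPrd S.p) => r'.hargs (Fin.cast (congrArg arPrd h).symm i)) S.args)
    (Con.and r'.con S.con)

/-- Derivation step of `S` using the (already renamed-apart) input rule `r'`:
the constraint `s̃' = ũ ∧ c' ∧ d` must be satisfiable in `D_C`, and the resulting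
query is `⟨q(t̃') | s̃' = ũ ∧ c' ∧ d⟩`. -/
def StepWith (I : Interp F arF Pc arP D) (r' : Rule F arF Pc arP Prd arPrd)
    (S T : Query F arF Pc arP Prd arPrd) : Prop :=
  ∃ h : r'.hp = S.p, (∃ v : ℕ → D, (stepCon r' S h).Sat I v) ∧
    T = ⟨r'.bp, r'.bargs, stepCon r' S h⟩

/-- Derivation step `S ⟹_r T`: there is a variant `r'` of `r`, variable disjoint
with `S`, which is an input rule for a step from `S` to `T`. -/
def Step (I : Interp F arF Pc arP D) (r : Rule F arF Pc arP Prd arPrd)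
    (S T : Query F arF Pc arP Prd arPrd) : Prop :=
  ∃ r' : Rule F arF Pc arP Prd arPrd,
    r.IsVariant r' ∧ Disjoint r'.fv S.fv ∧ StepWith I r' S T

/-- `S₀` loops w.r.t. the program `P`: there is an infinite derivation of `P ∪ {S₀}`,
i.e. an infinite sequence of derivation steps whose input rules are variants of rules
of `P`, variable disjoint from `S₀` and from the input rules used at earlier steps
(standardization apart). -/
def Loops (I : Interp F arF Pc arP D) (P : Set (Rule F arF Pc arP Prd arPrd))
    (S₀ : Query F arF Pc arP Prd arPrd) : Prop :=
  ∃ (S : ℕ → Query F arF Pc arP Prd arPrd) (rv : ℕ → Rule F arF Pc arP Prd arPrd),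
    S 0 = S₀ ∧
    ∀ n : ℕ, (∃ r ∈ P, r.IsVariant (rv n)) ∧
      Disjoint (rv n).fv S₀.fv ∧ (∀ m < n, Disjoint (rv n).fv (rv m).fv) ∧
      StepWith I (rv n) (S n) (S (n + 1))

/-! ## Sets of positions, projections, filters -/

/-- The set `[S|τ]` of projected atoms described by the projection of a query on a
set of positions `τ`. -/
def Query.projSet (I : Interp F arF Pc arP D) (τ : ∀ p : Prd, Set (Fin (arPrd p)))
    (S : Query F arF Pc arP Prd arPrd) :
    Set (Σ p : Prd, {i : Fin (arPrd p) // i ∈ τ p} → D) :=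
  { a | ∃ v : ℕ → D, S.con.Sat I v ∧ a = ⟨S.p, fun i => (S.args i.1).eval I.fn v⟩ }

/-- The complement `τ̄` of a set of positions. -/
def complPos (τ : ∀ p : Prd, Set (Fin (arPrd p))) : ∀ p : Prd, Set (Fin (arPrd p)) :=
  fun p => (τ p)ᶜ

/-- A query over a projected predicate `p|τ`. -/
structure PQuery (F : Type) (arF : F → ℕ) (Pc : Type) (arP : Pc → ℕ)
    {Prd : Type} {arPrd : Prd → ℕ} (τ : ∀ p : Prd, Set (Fin (arPrd p))) (p : Prd) where
  args : {i : Fin (arPrd p) // i ∈ τ p} → Tm F arF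
  con : Con F arF Pc arP

/-- The set of projected atoms described by a projected query. -/
def PQuery.set (I : Interp F arF Pc arP D) {τ : ∀ p : Prd, Set (Fin (arPrd p))} {p : Prd}
    (Q : PQuery F arF Pc arP τ p) :
    Set (Σ q : Prd, {i : Fin (arPrd q) // i ∈ τ q} → D) :=
  { a | ∃ v : ℕ → D, Q.con.Sat I v ∧ a = ⟨p, fun i => (Q.args i).eval I.fn v⟩ }

/-- A filter `Δ = (τ, δ)`: a set of positions together with, for each predicate `p`,
a query `δ(p)` over the projected predicate `p|τ` with satisfiable constraint. -/
structure Filt {F : Type} {arF : F → ℕ} {Pc : Type} {arP : Pc → ℕ} {D : Type}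
    (I : Interp F arF Pc arP D) (Prd : Type) (arPrd : Prd → ℕ) where
  τ : ∀ p : Prd, Set (Fin (arPrd p))
  δ : ∀ p : Prd, PQuery F arF Pc arP τ p
  δ_sat : ∀ p : Prd, ∃ v : ℕ → D, (δ p).con.Sat I v

variable {I : Interp F arF Pc arP D}

/-- A query `S` satisfies the filter `Δ` iff `[S|τ] ⊆ [δ(rel(S))]`. -/
def Filt.Satisfies (Δ : Filt I Prd arPrd) (S : Query F arF Pc arP Prd arPrd) : Prop :=
  S.projSet I Δ.τ ⊆ (Δ.δ S.p).set I

/-- `S'` is `Δ`-more general than `S`: `S'|τ̄` is more general than `S|τ̄`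
and `S'` satisfies `Δ`. -/
def Filt.DeltaMoreGen (Δ : Filt I Prd arPrd) (S' S : Query F arF Pc arP Prd arPrd) : Prop :=
  S.projSet I (complPos Δ.τ) ⊆ S'.projSet I (complPos Δ.τ) ∧ Δ.Satisfies S'

/-- `Δ` is derivation neutral (DN) for `r`. -/
def Filt.DN (Δ : Filt I Prd arPrd) (r : Rule F arF Pc arP Prd arPrd) : Prop :=
  ∀ S T, Step I r S T → ∀ S', Δ.DeltaMoreGen S' S →
    ∃ T', Step I r S' T' ∧ Δ.DeltaMoreGen T' T

/-! ## Normalized rules and DNlog -/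

/-- A normalized rule `p(X̃) ← c ◇ q(Ỹ)` where `X̃, Ỹ` are disjoint sequences of
distinct variables. -/
structure NRule (F : Type) (arF : F → ℕ) (Pc : Type) (arP : Pc → ℕ)
    (Prd : Type) (arPrd : Prd → ℕ) where
  hp : Prd
  X : Fin (arPrd hp) → ℕ
  bp : Prd
  Y : Fin (arPrd bp) → ℕ
  hX : Function.Injective X
  hY : Function.Injective Y
  hXY : ∀ i j, X i ≠ Y j
  con : Con F arF Pc arP

/-- The underlying rule of a normalized rule. -/
def NRule.toRule (r : NRule F arF Pc arP Prd arPrd) : Rule F arF Pc arP Prd arPrd :=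
  ⟨r.hp, fun i => .var (r.X i), r.con, r.bp, fun i => .var (r.Y i)⟩

/-- `local_var(r) = Var(c) ∖ (Var(X̃) ∪ Var(Ỹ))`. -/
def NRule.localVar (r : NRule F arF Pc arP Prd arPrd) : Set ℕ :=
  ↑r.con.fv \ (Set.range r.X ∪ Set.range r.Y)

/-- `v` and `w` agree on all variables outside `W`. -/
def agreesOff (W : Set ℕ) (v w : ℕ → D) : Prop := ∀ x ∉ W, v x = w x

/-- Semantics under `v` of the formula `sat(s̃, Q) = ∃_{Var(Q')} (s̃ = ũ' ∧ d')`,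
`Q'` a variable-disjoint variant of `Q = ⟨p|τ(ũ) | d⟩`. -/
def satFor (I : Interp F arF Pc arP D) {τ : ∀ p : Prd, Set (Fin (arPrd p))} {p : Prd}
    (s : {i : Fin (arPrd p) // i ∈ τ p} → Tm F arF) (Q : PQuery F arF Pc arP τ p)
    (v : ℕ → D) : Prop :=
  ∃ w : ℕ → D, Q.con.Sat I w ∧ ∀ i, (s i).eval I.fn v = (Q.args i).eval I.fn w

/-- `Δ` is DNlog for a normalized rule `r = p(X̃) ← c ◇ q(Ỹ)`:
`D_C ⊨ c → ∀_{X̃|τ} [ sat(X̃|τ, δ(p)) → ∃_Y (sat(Ỹ|τ, δ(q)) ∧ c) ]` where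
`Y = Var(Ỹ|τ) ∪ local_var(r)`. -/
def Filt.DNlog (Δ : Filt I Prd arPrd) (r : NRule F arF Pc arP Prd arPrd) : Prop :=
  ∀ v : ℕ → D, r.con.Sat I v →
    ∀ v₁ : ℕ → D, agreesOff (r.X '' Δ.τ r.hp) v₁ v →
      satFor I (fun i => Tm.var (r.X i.1)) (Δ.δ r.hp) v₁ →
        ∃ v₂ : ℕ → D,
          agreesOff (r.Y '' Δ.τ r.bp ∪ r.localVar) v₂ v₁ ∧
          satFor I (fun i => Tm.var (r.Y i.1)) (Δ.δ r.bp) v₂ ∧ r.con.Sat I v₂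

/-! ## Flat rules and DNsyn -/

/-- Variables of a sequence of terms. -/
def varsOf {n : ℕ} (s : Fin n → Tm F arF) : Finset ℕ :=
  Finset.univ.biUnion fun i => (s i).fv

/-- Variables of the projection of a sequence of terms on a set of positions. -/
def varsOfProj {n : ℕ} (σ : Set (Fin n)) (s : Fin n → Tm F arF) : Set ℕ :=
  ⋃ i : {i : Fin n // i ∈ σ}, ↑(s i.1).fv

/-- A flat rule `p(X̃) ← (X̃ = s̃ ∧ Ỹ = t̃) ◇ q(Ỹ)` with `Var(s̃, t̃)` local. -/
structure FlatRule (F : Type) (arF : F → ℕ) (Pc : Type) (arP : Pc → ℕ)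
    (Prd : Type) (arPrd : Prd → ℕ) extends NRule F arF Pc arP Prd arPrd where
  s : Fin (arPrd hp) → Tm F arF
  t : Fin (arPrd bp) → Tm F arF
  con_eq : con = Con.and (argsEqCon (fun i => Tm.var (X i)) s)
                         (argsEqCon (fun i => Tm.var (Y i)) t)
  local_args : ∀ x ∈ varsOf s ∪ varsOf t, x ∉ Set.range X ∪ Set.range Y

/-! ## The constraint domain Term (logic programming) -/

/-- Finite trees (ground terms) over `F`. -/
inductive GTm (F : Type) (arF : F → ℕ) : Type
  | app : (f : F) → (Fin (arF f) → GTm F arF) → GTm F arF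

/-- Arities for the empty set of constraint-predicate symbols (only `=` is available). -/
def emptyAr : Empty → ℕ := fun c => c.elim

/-- The domain of computation of the constraint domain `Term`: the algebra of
finite trees, with no primitive constraints but equality. -/
def termInterp (F : Type) (arF : F → ℕ) : Interp F arF Empty emptyAr (GTm F arF) :=
  ⟨fun f ts => GTm.app f ts, fun c => c.elim⟩

end CLP

/-! Resolving `⟨H|c⟩` with a variant of `r` yields a query that describes the same atom as
`⟨B|c⟩` and is satisfiable whenever `⟨B|c⟩` is. Every step of the infinite derivation of
`⟨B|c⟩` is then replayed with its input rule renamed into a fresh block of variables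
(the `k`-th rule is moved from `[0, N)` to `[N, 2N)` by a block swap, with `N` at least doubling
from one rule to the next), and a single valuation, glued blockwise from a solution of the
original constraint, satisfies every replayed constraint. -/

open Function in
theorem exists_forall_eqOn_of_pairwise_disjoint {ι α β : Type*} [Nonempty β] {A : ι → Set α}
    (hA : Pairwise (Disjoint on A)) (f : ι → α → β) :
    ∃ g : α → β, ∀ i, Set.EqOn g (f i) (A i) := by
  classical
  refine ⟨fun x => if h : ∃ i, x ∈ A i then f h.choose x else Classical.arbitrary β,
    fun i x hx => ?_⟩
  have h : ∃ i, x ∈ A i := ⟨i, hx⟩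
  have hi : h.choose = i := hA.eq (Set.not_disjoint_iff.2 ⟨x, h.choose_spec, hx⟩)
  simp only [dif_pos h, hi]

namespace CLP

variable {F : Type} {arF : F → ℕ} {Pc : Type} {arP : Pc → ℕ}
  {Prd : Type} {arPrd : Prd → ℕ} {D : Type} {I : Interp F arF Pc arP D}

section Renaming

theorem Tm.eval_rename (If : (f : F) → (Fin (arF f) → D) → D) (σ : ℕ → ℕ)
    (v : ℕ → D) :
    ∀ t : Tm F arF, (t.rename σ).eval If v = t.eval If (v ∘ σ)
  | .var _ => rfl
  | .app f ts => congrArg (If f) (funext fun i => Tm.eval_rename If σ v (ts i))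

theorem Con.sat_rename (σ : ℕ → ℕ) (v : ℕ → D) :
    ∀ c : Con F arF Pc arP, (c.rename σ).Sat I v ↔ c.Sat I (v ∘ σ)
  | .tru => Iff.rfl
  | .eq s t => by simp only [Con.rename, Con.Sat, Tm.eval_rename]
  | .prim c ts => by simp only [Con.rename, Con.Sat, Tm.eval_rename]
  | .and c d => by simp only [Con.rename, Con.Sat, Con.sat_rename σ v c, Con.sat_rename σ v d]

theorem Tm.eval_congr (If : (f : F) → (Fin (arF f) → D) → D) {v w : ℕ → D} :
    ∀ t : Tm F arF, (∀ x ∈ t.fv, v x = w x) → t.eval If v = t.eval If w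
  | .var x, h => h x (Finset.mem_singleton_self x)
  | .app f ts, h => congrArg (If f) <| funext fun i => Tm.eval_congr If (ts i) fun x hx =>
      h x (Finset.mem_biUnion.2 ⟨i, Finset.mem_univ i, hx⟩)

theorem Con.sat_congr {v w : ℕ → D} :
    ∀ c : Con F arF Pc arP, (∀ x ∈ c.fv, v x = w x) → (c.Sat I v ↔ c.Sat I w)
  | .tru, _ => Iff.rfl
  | .eq s t, h => by
      simp only [Con.Sat]
      rw [Tm.eval_congr I.fn s fun x hx => h x (by simp [Con.fv, hx]),
        Tm.eval_congr I.fn t fun x hx => h x (by simp [Con.fv, hx])]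
  | .prim c ts, h => by
      simp only [Con.Sat]
      rw [funext fun i => Tm.eval_congr I.fn (ts i) fun x hx =>
        h x (Finset.mem_biUnion.2 ⟨i, Finset.mem_univ i, hx⟩)]
  | .and c d, h => by
      simp only [Con.Sat]
      rw [Con.sat_congr c fun x hx => h x (by simp [Con.fv, hx]),
        Con.sat_congr d fun x hx => h x (by simp [Con.fv, hx])]

theorem Tm.fv_rename (σ : ℕ → ℕ) : ∀ t : Tm F arF, (t.rename σ).fv = t.fv.image σ
  | .var x => by simp [Tm.rename, Tm.fv]
  | .app f ts => by
      simp only [Tm.rename, Tm.fv, Finset.biUnion_image]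
      exact Finset.biUnion_congr rfl fun i _ => Tm.fv_rename σ (ts i)

theorem Con.fv_rename (σ : ℕ → ℕ) :
    ∀ c : Con F arF Pc arP, (c.rename σ).fv = c.fv.image σ
  | .tru => by simp [Con.rename, Con.fv]
  | .eq s t => by simp [Con.rename, Con.fv, Tm.fv_rename, Finset.image_union]
  | .prim c ts => by
      simp only [Con.rename, Con.fv, Finset.biUnion_image]
      exact Finset.biUnion_congr rfl fun i _ => Tm.fv_rename σ (ts i)
  | .and c d => by
      simp [Con.rename, Con.fv, Con.fv_rename σ c, Con.fv_rename σ d, Finset.image_union]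

theorem Rule.fv_rename (σ : ℕ → ℕ) (r : Rule F arF Pc arP Prd arPrd) :
    (r.rename σ).fv = r.fv.image σ := by
  simp only [Rule.rename, Rule.fv, Con.fv_rename, Tm.fv_rename, Finset.image_union,
    Finset.biUnion_image]
  rfl

theorem Tm.rename_rename (σ τ : ℕ → ℕ) :
    ∀ t : Tm F arF, (t.rename σ).rename τ = t.rename (τ ∘ σ)
  | .var _ => rfl
  | .app f ts => congrArg (Tm.app f) (funext fun i => Tm.rename_rename σ τ (ts i))

theorem Con.rename_rename (σ τ : ℕ → ℕ) :
    ∀ c : Con F arF Pc arP, (c.rename σ).rename τ = c.rename (τ ∘ σ)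
  | .tru => rfl
  | .eq s t => by simp only [Con.rename, Tm.rename_rename]
  | .prim c ts => by simp only [Con.rename, Tm.rename_rename]
  | .and c d => by simp only [Con.rename, Con.rename_rename σ τ c, Con.rename_rename σ τ d]

theorem Rule.rename_rename (σ τ : ℕ → ℕ) (r : Rule F arF Pc arP Prd arPrd) :
    (r.rename σ).rename τ = r.rename (τ ∘ σ) := by
  simp only [Rule.rename, Con.rename_rename, Tm.rename_rename]

theorem Rule.IsVariant.rename {r r' : Rule F arF Pc arP Prd arPrd} (h : r.IsVariant r')
    (ρ : ℕ ≃ ℕ) : r.IsVariant (r'.rename ρ) := by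
  obtain ⟨σ, rfl⟩ := h
  exact ⟨σ.trans ρ, Rule.rename_rename σ ρ r⟩

end Renaming

section Resolvent

theorem Con.sat_foldr_and (v : ℕ → D) (l : List (Con F arF Pc arP)) :
    (l.foldr Con.and Con.tru).Sat I v ↔ ∀ c ∈ l, c.Sat I v := by
  induction l with
  | nil => simp [Con.Sat]
  | cons c l ih => simp [Con.Sat, ih]

theorem argsEqCon_sat {n : ℕ} (u w : Fin n → Tm F arF) (v : ℕ → D) :
    (argsEqCon (Pc := Pc) (arP := arP) u w).Sat I v ↔
      ∀ i, (u i).eval I.fn v = (w i).eval I.fn v := by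
  simp [argsEqCon, Con.sat_foldr_and, Con.Sat]

variable (I) in
def Query.atom (v : ℕ → D) (S : Query F arF Pc arP Prd arPrd) :
    Σ p : Prd, Fin (arPrd p) → D :=
  ⟨S.p, fun i => (S.args i).eval I.fn v⟩

variable (I) in
def Rule.headAtom (v : ℕ → D) (r : Rule F arF Pc arP Prd arPrd) :
    Σ p : Prd, Fin (arPrd p) → D :=
  ⟨r.hp, fun i => (r.hargs i).eval I.fn v⟩

variable (I) in
def Rule.bodyAtom (v : ℕ → D) (r : Rule F arF Pc arP Prd arPrd) :
    Σ p : Prd, Fin (arPrd p) → D :=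
  ⟨r.bp, fun i => (r.bargs i).eval I.fn v⟩

open Classical in
noncomputable def resolvent (r' : Rule F arF Pc arP Prd arPrd)
    (S : Query F arF Pc arP Prd arPrd) : Query F arF Pc arP Prd arPrd :=
  if h : r'.hp = S.p then ⟨r'.bp, r'.bargs, stepCon r' S h⟩ else S

noncomputable def resolventSeq (S₀ : Query F arF Pc arP Prd arPrd)
    (R : ℕ → Rule F arF Pc arP Prd arPrd) : ℕ → Query F arF Pc arP Prd arPrd
  | 0 => S₀
  | k + 1 => resolvent (R k) (resolventSeq S₀ R k)

variable {r' : Rule F arF Pc arP Prd arPrd} {S T : Query F arF Pc arP Prd arPrd} {v : ℕ → D}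

theorem resolvent_of_hp_eq (h : r'.hp = S.p) :
    resolvent r' S = ⟨r'.bp, r'.bargs, stepCon r' S h⟩ :=
  dif_pos h

theorem resolvent_atom (h : r'.hp = S.p) : (resolvent r' S).atom I v = r'.bodyAtom I v := by
  rw [resolvent_of_hp_eq h]
  rfl

theorem resolvent_con_sat (h : r'.hp = S.p) :
    (resolvent r' S).con.Sat I v ↔
      r'.headAtom I v = S.atom I v ∧ r'.con.Sat I v ∧ S.con.Sat I v := by
  obtain ⟨hp, hargs, c, bp, bargs⟩ := r'
  obtain ⟨p, args, d⟩ := S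
  dsimp only at h
  subst h
  rw [resolvent_of_hp_eq rfl]
  simp [stepCon, Con.Sat, argsEqCon_sat, Rule.headAtom, Query.atom, funext_iff]

theorem StepWith.eq_resolvent (hs : StepWith I r' S T) : T = resolvent r' S := by
  obtain ⟨h, -, rfl⟩ := hs
  exact (resolvent_of_hp_eq h).symm

theorem StepWith.exists_con_sat (hs : StepWith I r' S T) : ∃ v, S.con.Sat I v := by
  obtain ⟨h, ⟨v, hv⟩, -⟩ := hs
  exact ⟨v, hv.2.2⟩

theorem stepWith_resolvent (h : r'.hp = S.p) (hsat : (resolvent r' S).con.Sat I v) :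
    StepWith I r' S (resolvent r' S) := by
  rw [resolvent_of_hp_eq h] at hsat ⊢
  exact ⟨h, ⟨v, hsat⟩, rfl⟩

end Resolvent

section Simulation

variable {r : Rule F arF Pc arP Prd arPrd} {ρ : ℕ → ℕ} {v w : ℕ → D}

theorem Rule.hargs_fv_subset (r : Rule F arF Pc arP Prd arPrd) (i : Fin (arPrd r.hp)) :
    (r.hargs i).fv ⊆ r.fv := fun x hx => by
  simp only [Rule.fv, Finset.mem_union, Finset.mem_biUnion, Finset.mem_univ, true_and]
  exact Or.inl (Or.inl ⟨i, hx⟩)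

theorem Rule.bargs_fv_subset (r : Rule F arF Pc arP Prd arPrd) (i : Fin (arPrd r.bp)) :
    (r.bargs i).fv ⊆ r.fv := fun x hx => by
  simp only [Rule.fv, Finset.mem_union, Finset.mem_biUnion, Finset.mem_univ, true_and]
  exact Or.inr ⟨i, hx⟩

theorem Rule.con_fv_subset (r : Rule F arF Pc arP Prd arPrd) : r.con.fv ⊆ r.fv := fun x hx => by
  simp only [Rule.fv, Finset.mem_union]
  exact Or.inl (Or.inr hx)

theorem Rule.headQuery_fv_subset (r : Rule F arF Pc arP Prd arPrd) : r.headQuery.fv ⊆ r.fv :=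
  Finset.union_subset (Finset.biUnion_subset.2 fun i _ => r.hargs_fv_subset i) r.con_fv_subset

theorem Rule.headAtom_rename (hρ : ∀ x ∈ r.fv, w (ρ x) = v x) :
    (r.rename ρ).headAtom I w = r.headAtom I v :=
  congrArg (Sigma.mk r.hp) <| funext fun i => (Tm.eval_rename I.fn ρ w _).trans <|
    Tm.eval_congr I.fn _ fun x hx => hρ x (r.hargs_fv_subset i hx)

theorem Rule.bodyAtom_rename (hρ : ∀ x ∈ r.fv, w (ρ x) = v x) :
    (r.rename ρ).bodyAtom I w = r.bodyAtom I v :=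
  congrArg (Sigma.mk r.bp) <| funext fun i => (Tm.eval_rename I.fn ρ w _).trans <|
    Tm.eval_congr I.fn _ fun x hx => hρ x (r.bargs_fv_subset i hx)

theorem Rule.con_sat_rename (hρ : ∀ x ∈ r.fv, w (ρ x) = v x) :
    (r.rename ρ).con.Sat I w ↔ r.con.Sat I v :=
  (Con.sat_rename ρ w r.con).trans <|
    Con.sat_congr r.con fun x hx => hρ x (r.con_fv_subset hx)

variable (I) in
def Query.Simulates (w v : ℕ → D) (T S : Query F arF Pc arP Prd arPrd) : Prop :=
  T.atom I w = S.atom I v ∧ (S.con.Sat I v → T.con.Sat I w)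

theorem Query.Simulates.p_eq {T S : Query F arF Pc arP Prd arPrd} (h : T.Simulates I w v S) :
    T.p = S.p :=
  congrArg Sigma.fst h.1

theorem Query.Simulates.resolvent_rename {T S : Query F arF Pc arP Prd arPrd}
    (hT : T.Simulates I w v S) (hp : r.hp = S.p) (hρ : ∀ x ∈ r.fv, w (ρ x) = v x) :
    (resolvent (r.rename ρ) T).Simulates I w v (resolvent r S) := by
  have hp' : (r.rename ρ).hp = T.p := hp.trans hT.p_eq.symm
  refine ⟨?_, fun hS => ?_⟩
  · rw [resolvent_atom hp', resolvent_atom hp, Rule.bodyAtom_rename hρ]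
  · obtain ⟨hatom, hcon, hSv⟩ := (resolvent_con_sat hp).1 hS
    exact (resolvent_con_sat hp').2
      ⟨(Rule.headAtom_rename hρ).trans (hatom.trans hT.1.symm),
        (Rule.con_sat_rename hρ).2 hcon, hT.2 hSv⟩

theorem Rule.resolvent_rename_headQuery_simulates (hw : ∀ x ∈ r.fv, w x = v x)
    (hρ : ∀ x ∈ r.fv, w (ρ x) = v x) :
    (resolvent (r.rename ρ) r.headQuery).Simulates I w v r.bodyQuery := by
  have hatom : r.headQuery.atom I w = r.headAtom I v :=
    congrArg (Sigma.mk r.hp) <| funext fun i =>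
      Tm.eval_congr I.fn _ fun x hx => hw x (r.hargs_fv_subset i hx)
  refine ⟨(resolvent_atom rfl).trans (Rule.bodyAtom_rename hρ), fun hc => ?_⟩
  refine (resolvent_con_sat rfl).2 ⟨(Rule.headAtom_rename hρ).trans hatom.symm,
    (Rule.con_sat_rename hρ).2 hc, ?_⟩
  exact (Con.sat_congr r.con fun x hx => hw x (r.con_fv_subset hx)).2 hc

theorem Query.Simulates.of_stepWith {S T : ℕ → Query F arF Pc arP Prd arPrd}
    {R : ℕ → Rule F arF Pc arP Prd arPrd} {ρ : ℕ → ℕ → ℕ}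
    (hS : ∀ k, StepWith I (R k) (S k) (S (k + 1)))
    (hT : ∀ k, T (k + 1) = resolvent ((R k).rename (ρ k)) (T k))
    (hρ : ∀ k, ∀ x ∈ (R k).fv, w (ρ k x) = v x) (h₀ : (T 0).Simulates I w v (S 0)) :
    ∀ k, (T k).Simulates I w v (S k)
  | 0 => h₀
  | k + 1 => by
    rw [hT k, (hS k).eq_resolvent]
    exact (Query.Simulates.of_stepWith hS hT hρ h₀ k).resolvent_rename (hS k).1 (hρ k)

end Simulation

section RenamingApart

def blockSwap (N : ℕ) : ℕ ≃ ℕ :=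
  Function.Involutive.toPerm (fun x => if x < N then x + N else if x < 2 * N then x - N else x)
    fun x => by dsimp only; split_ifs <;> omega

theorem blockSwap_of_lt {N x : ℕ} (h : x < N) : blockSwap N x = x + N := if_pos h

variable (R : ℕ → Rule F arF Pc arP Prd arPrd)

def blockStart : ℕ → ℕ
  | 0 => 0
  | k + 1 => max (2 * blockStart k) ((R k).fv.sup id + 1)

def renameApart (k : ℕ) : Rule F arF Pc arP Prd arPrd :=
  (R k).rename (blockSwap (blockStart R (k + 1)))

theorem blockStart_monotone : Monotone (blockStart R) :=
  monotone_nat_of_le_succ fun k => by simp only [blockStart]; omega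

theorem lt_blockStart_of_mem_fv {k x : ℕ} (hx : x ∈ (R k).fv) : x < blockStart R (k + 1) :=
  lt_of_lt_of_le (Nat.lt_succ_of_le (Finset.le_sup (f := id) hx)) (le_max_right _ _)

theorem mem_Ico_of_mem_fv_renameApart {k x : ℕ} (hx : x ∈ (renameApart R k).fv) :
    x ∈ Set.Ico (blockStart R (k + 1)) (blockStart R (k + 2)) := by
  rw [renameApart, Rule.fv_rename] at hx
  obtain ⟨y, hy, rfl⟩ := Finset.mem_image.1 hx
  have hy' := lt_blockStart_of_mem_fv R hy
  have h2 : 2 * blockStart R (k + 1) ≤ blockStart R (k + 2) := le_max_left _ _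
  rw [blockSwap_of_lt hy', Set.mem_Ico]
  omega

theorem renameApart_disjoint_of_lt {m n : ℕ} (h : m < n) :
    Disjoint (renameApart R n).fv (renameApart R m).fv := by
  refine Finset.disjoint_left.2 fun x hn hm => ?_
  have := blockStart_monotone R (show m + 2 ≤ n + 1 by omega)
  have := mem_Ico_of_mem_fv_renameApart R hn
  have := mem_Ico_of_mem_fv_renameApart R hm
  simp only [Set.mem_Ico] at *
  omega

theorem renameApart_disjoint_fv_zero (n : ℕ) : Disjoint (renameApart R n).fv (R 0).fv := by
  refine Finset.disjoint_left.2 fun x hn h0 => ?_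
  have := blockStart_monotone R (show 1 ≤ n + 1 by omega)
  have := mem_Ico_of_mem_fv_renameApart R hn
  have := lt_blockStart_of_mem_fv R h0
  simp only [Set.mem_Ico, zero_add] at *
  omega

theorem exists_valuation_renameApart (v : ℕ → D) :
    ∃ w : ℕ → D, (∀ x ∈ (R 0).fv, w x = v x) ∧
      ∀ k, ∀ x ∈ (R k).fv, w (blockSwap (blockStart R (k + 1)) x) = v x := by
  have : Nonempty D := ⟨v 0⟩
  obtain ⟨w, hw⟩ := exists_forall_eqOn_of_pairwise_disjoint
    (blockStart_monotone R).pairwise_disjoint_on_Ico_succ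
    fun n => match n with
      | 0 => v
      | k + 1 => v ∘ (blockSwap (blockStart R (k + 1))).symm
  refine ⟨w, fun x hx => hw 0 ⟨Nat.zero_le x, lt_blockStart_of_mem_fv R hx⟩,
    fun k x hx => ?_⟩
  have hmem : blockSwap (blockStart R (k + 1)) x ∈ (renameApart R k).fv := by
    rw [renameApart, Rule.fv_rename]
    exact Finset.mem_image_of_mem _ hx
  rw [hw (k + 1) (mem_Ico_of_mem_fv_renameApart R hmem)]
  exact congrArg v ((blockSwap _).symm_apply_apply x)

end RenamingApart

end CLP

open CLP in
theorem stmt6_general {F : Type} {arF : F → ℕ} {Pc : Type} {arP : Pc → ℕ}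
    {Prd : Type} {arPrd : Prd → ℕ} {D : Type} (I : Interp F arF Pc arP D)
    (P : Set (Rule F arF Pc arP Prd arPrd)) (r : Rule F arF Pc arP Prd arPrd)
    (hr : r ∈ P) (h : Loops I P r.bodyQuery) :
    Loops I P r.headQuery := by
  obtain ⟨S, rv, hS0, hloop⟩ := h
  have hstep (k : ℕ) : StepWith I (rv k) (S k) (S (k + 1)) := (hloop k).2.2.2
  let R : ℕ → Rule F arF Pc arP Prd arPrd := fun k => Nat.casesOn k r rv
  let T := resolventSeq r.headQuery (renameApart R)
  refine ⟨T, renameApart R, rfl,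
    fun n => ⟨?_, ?_, fun m hm => renameApart_disjoint_of_lt R hm, ?_⟩⟩
  · cases n with
    | zero => exact ⟨r, hr, _, rfl⟩
    | succ k =>
      obtain ⟨r₀, hr₀, hvar⟩ := (hloop k).1
      exact ⟨r₀, hr₀, hvar.rename _⟩
  · exact (renameApart_disjoint_fv_zero R n).mono_right r.headQuery_fv_subset
  · obtain ⟨v, hv⟩ := (hstep n).exists_con_sat
    obtain ⟨w, hw₀, hw⟩ := exists_valuation_renameApart R v
    have hsim : ∀ k, (T (k + 1)).Simulates I w v (S k) :=
      Query.Simulates.of_stepWith hstep (fun k => rfl) (fun k => hw (k + 1))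
        (hS0 ▸ Rule.resolvent_rename_headQuery_simulates hw₀ (hw 0))
    have hp : (renameApart R n).hp = (T n).p := by
      cases n with
      | zero => rfl
      | succ k => exact (hstep k).1.trans (hsim k).p_eq.symm
    exact stepWith_resolvent hp ((hsim n).2 hv)

open CLP in
/-- for a rule `r = H ← c ◇ B` of program `P`, if `⟨B|c⟩` loops
w.r.t. `P` then `⟨H|c⟩` loops w.r.t. `P`. -/
theorem stmt6 {F : Type} {arF : F → ℕ} {Pc : Type} {arP : Pc → ℕ}
    {Prd : Type} {arPrd : Prd → ℕ} {D : Type} (I : Interp F arF Pc arP D)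
    (P : Set (Rule F arF Pc arP Prd arPrd)) (r : Rule F arF Pc arP Prd arPrd)
    (hr : r ∈ P) (hc : ∃ v : ℕ → D, r.con.Sat I v)
    (h : Loops I P r.bodyQuery) :
    Loops I P r.headQuery :=
  stmt6_general I P r hr h
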